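/- arXiv:0708.1037 — 2 statements merged into one kernel-verified Lean document; each statement's English description precedes it below -/
import Mathlib

section
/- If p̄ = p̄₁ × ⋯ × p̄_N is an input distribution achieving the channel capacity C of an N-user discrete memoryless MAC, then for every user k and every input symbol i_k: J(p̄; i_k) = C whenever p̄_k(i_k) > 0, and J(p̄; i_k) ≤ C whenever p̄_k(i_k) = 0, where J(p̄; i_k) = Σ_{j, i₁,...,i_{k-1},i_{k+1},...,i_N} (∏_{ℓ≠k} p̄_ℓ(i_ℓ)) P(j|i₁,...,i_N) log(P(j|i₁,...,i_N)/q(j)). -/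
open Real Finset

/-- Output distribution of an N-user MAC. -/
noncomputable def outDist {N m : ℕ} {n : Fin N → ℕ}
    (P : (∀ k, Fin (n k)) → Fin m → ℝ) (p : ∀ k, Fin (n k) → ℝ) (j : Fin m) : ℝ :=
  ∑ i : ∀ k, Fin (n k), (∏ k, p k (i k)) * P i j

/-- Mutual information of an N-user MAC. -/
noncomputable def mutualInfo {N m : ℕ} {n : Fin N → ℕ}
    (P : (∀ k, Fin (n k)) → Fin m → ℝ) (p : ∀ k, Fin (n k) → ℝ) : ℝ :=
  ∑ j : Fin m, ∑ i : ∀ k, Fin (n k),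
    (∏ k, p k (i k)) * P i j * Real.log (P i j / outDist P p j)

/-- The Kuhn-Tucker functional `J(p; i_k)` of user `k`, symbol `a`. -/
noncomputable def Jfun {N m : ℕ} {n : Fin N → ℕ}
    (P : (∀ k, Fin (n k)) → Fin m → ℝ) (p : ∀ k, Fin (n k) → ℝ)
    (k : Fin N) (a : Fin (n k)) : ℝ :=
  ∑ j : Fin m, ∑ i : ∀ l, Fin (n l),
    if i k = a then
      (∏ l ∈ Finset.univ.erase k, p l (i l)) * P i j * Real.log (P i j / outDist P p j)
    else 0

/-- A (row-)stochastic channel matrix. -/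
def IsChannel {N m : ℕ} {n : Fin N → ℕ} (P : (∀ k, Fin (n k)) → Fin m → ℝ) : Prop :=
  ∀ i, (∀ j, 0 ≤ P i j) ∧ ∑ j, P i j = 1

/-- Domain of product input distributions: each user's distribution lies in its simplex. -/
def macDomain (N : ℕ) (n : Fin N → ℕ) : Set (∀ k, Fin (n k) → ℝ) :=
  {p | ∀ k, p k ∈ stdSimplex ℝ (Fin (n k))}

private lemma sum_prod_pi {N : ℕ} {n : Fin N → ℕ} (p : ∀ k, Fin (n k) → ℝ) :
    ∑ i : ∀ k, Fin (n k), ∏ k, p k (i k) = ∏ k, ∑ b, p k b := by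
  classical
  exact (Fintype.prod_sum (fun k b => p k b)).symm

private lemma Jle {N m : ℕ} {n : Fin N → ℕ}
    (P : (∀ k, Fin (n k)) → Fin m → ℝ) (hP : IsChannel P)
    (pbar : ∀ k, Fin (n k) → ℝ) (hmem : pbar ∈ macDomain N n)
    (hopt : ∀ p ∈ macDomain N n, mutualInfo P p ≤ mutualInfo P pbar)
    (k : Fin N) (a : Fin (n k)) :
    Jfun P pbar k a ≤ mutualInfo P pbar := by
  classical
  have hnn : ∀ l b, 0 ≤ pbar l b := fun l => (hmem l).1
  have hsum1 : ∀ l, ∑ b, pbar l b = 1 := fun l => (hmem l).2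
  have hP0 : ∀ i j, 0 ≤ P i j := fun i => (hP i).1
  set C := mutualInfo P pbar with hCdef
  set c : (∀ l, Fin (n l)) → ℝ := fun i => ∏ l ∈ Finset.univ.erase k, pbar l (i l) with hc
  set q : Fin m → ℝ := fun j => ∑ i : ∀ l, Fin (n l), (∏ l, pbar l (i l)) * P i j with hq
  set r : Fin m → ℝ := fun j => ∑ i : ∀ l, Fin (n l), if i k = a then c i * P i j else 0 with hrdef
  have hqout : ∀ j, outDist P pbar j = q j := fun j => rfl
  have hc0 : ∀ i, 0 ≤ c i := fun i => by
    rw [hc]; exact Finset.prod_nonneg fun l _ => hnn l _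
  have hw0 : ∀ i : ∀ l, Fin (n l), 0 ≤ ∏ l, pbar l (i l) :=
    fun i => Finset.prod_nonneg fun l _ => hnn l _
  have hq0 : ∀ j, 0 ≤ q j := fun j => by
    rw [hq]; exact Finset.sum_nonneg fun i _ => mul_nonneg (hw0 i) (hP0 i j)
  have hr0 : ∀ j, 0 ≤ r j := fun j => by
    rw [hrdef]
    exact Finset.sum_nonneg fun i _ => by
      split_ifs with h
      · exact mul_nonneg (hc0 i) (hP0 i j)
      · exact le_rfl
  have hwle : ∀ j (i : ∀ l, Fin (n l)), (∏ l, pbar l (i l)) * P i j ≤ q j := fun j i => by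
    rw [hq]
    exact Finset.single_le_sum (fun i' _ => mul_nonneg (hw0 i') (hP0 i' j)) (Finset.mem_univ i)
  have hcrle : ∀ j (i : ∀ l, Fin (n l)), i k = a → c i * P i j ≤ r j := by
    intro j i hik
    rw [hrdef]
    have h := Finset.single_le_sum
      (f := fun i' : ∀ l, Fin (n l) => if i' k = a then c i' * P i' j else 0)
      (fun i' _ => by
        show (0:ℝ) ≤ if i' k = a then c i' * P i' j else 0
        split_ifs with h
        · exact mul_nonneg (hc0 i') (hP0 i' j)
        · exact le_rfl) (Finset.mem_univ i)
    simpa [hik] using h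
  have hsplit : ∀ (p : ∀ l, Fin (n l) → ℝ) (i : ∀ l, Fin (n l)),
      ∏ l, p l (i l) = p k (i k) * ∏ l ∈ Finset.univ.erase k, p l (i l) :=
    fun p i => (Finset.mul_prod_erase Finset.univ (fun l => p l (i l)) (Finset.mem_univ k)).symm
  have hq1 : ∑ j, q j = 1 := by
    rw [hq, Finset.sum_comm]
    have e : ∀ i : ∀ l, Fin (n l), ∑ j, (∏ l, pbar l (i l)) * P i j = ∏ l, pbar l (i l) :=
      fun i => by rw [← Finset.mul_sum, (hP i).2, mul_one]
    rw [Finset.sum_congr rfl fun i _ => e i, sum_prod_pi]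
    simp [hsum1]
  have hsumc : ∑ i : ∀ l, Fin (n l), (if i k = a then c i else 0) = 1 := by
    have e1 : ∀ i : ∀ l, Fin (n l),
        (∏ l, Function.update pbar k (fun b => if b = a then (1:ℝ) else 0) l (i l))
          = (if i k = a then c i else 0) := by
      intro i
      rw [hsplit]
      have e2 : (∏ l ∈ Finset.univ.erase k,
          Function.update pbar k (fun b => if b = a then (1:ℝ) else 0) l (i l)) = c i := by
        rw [hc]
        exact Finset.prod_congr rfl fun l hl => by
          rw [Function.update_of_ne (Finset.ne_of_mem_erase hl)]
      rw [e2, Function.update_self]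
      split_ifs <;> ring
    rw [← Finset.sum_congr rfl fun i _ => e1 i, sum_prod_pi]
    refine Finset.prod_eq_one fun l _ => ?_
    by_cases hl : l = k
    · subst hl; rw [Function.update_self]; simp
    · rw [Function.update_of_ne hl]; exact hsum1 l
  have hr1 : ∑ j, r j = 1 := by
    rw [hrdef, Finset.sum_comm]
    have e : ∀ i : ∀ l, Fin (n l),
        ∑ j, (if i k = a then c i * P i j else 0) = (if i k = a then c i else 0) := by
      intro i
      by_cases h : i k = a
      · simp only [h, if_true]
        rw [← Finset.mul_sum, (hP i).2, mul_one]
      · simp [h]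
    rw [Finset.sum_congr rfl fun i _ => e i, hsumc]
  set pt : ℝ → ∀ l, Fin (n l) → ℝ := fun t =>
    Function.update pbar k (fun b => (1 - t) * pbar k b + t * (if b = a then 1 else 0)) with hptdef
  have hpt_mem : ∀ t : ℝ, 0 ≤ t → t ≤ 1 → pt t ∈ macDomain N n := by
    intro t h0 h1 l
    by_cases hl : l = k
    · subst hl
      refine ⟨fun b => ?_, ?_⟩
      · simp only [hptdef, Function.update_self]
        have hb : (0:ℝ) ≤ if b = a then (1:ℝ) else 0 := by split_ifs <;> norm_num
        have := hnn l b
        nlinarith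
      · simp only [hptdef, Function.update_self]
        rw [Finset.sum_add_distrib, ← Finset.mul_sum, ← Finset.mul_sum, hsum1]
        simp
    · refine ⟨fun b => ?_, ?_⟩
      · simp only [hptdef, Function.update_of_ne hl]; exact hnn l b
      · simp only [hptdef, Function.update_of_ne hl]; exact hsum1 l
  have hptc : ∀ (t : ℝ) (i : ∀ l, Fin (n l)),
      (∏ l ∈ Finset.univ.erase k, pt t l (i l)) = c i := by
    intro t i
    rw [hc]
    refine Finset.prod_congr rfl fun l hl => ?_
    simp only [hptdef]
    rw [Function.update_of_ne (Finset.ne_of_mem_erase hl)]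
  have hptprod : ∀ (t : ℝ) (i : ∀ l, Fin (n l)),
      ∏ l, pt t l (i l)
        = ((1 - t) * pbar k (i k) + t * (if i k = a then 1 else 0)) * c i := by
    intro t i
    rw [hsplit (pt t) i, hptc]
    congr 1
    simp only [hptdef]
    rw [Function.update_self]
  have hout : ∀ (t : ℝ) (j : Fin m), outDist P (pt t) j = (1 - t) * q j + t * r j := by
    intro t j
    have e : ∀ i : ∀ l, Fin (n l), (∏ l, pt t l (i l)) * P i j
        = (1 - t) * ((∏ l, pbar l (i l)) * P i j)
          + t * (if i k = a then c i * P i j else 0) := by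
      intro i
      rw [hptprod, hsplit pbar i]
      split_ifs <;> ring
    calc outDist P (pt t) j = ∑ i : ∀ l, Fin (n l), (∏ l, pt t l (i l)) * P i j := rfl
      _ = ∑ i : ∀ l, Fin (n l), ((1 - t) * ((∏ l, pbar l (i l)) * P i j)
            + t * (if i k = a then c i * P i j else 0)) :=
          Finset.sum_congr rfl fun i _ => e i
      _ = (1 - t) * q j + t * r j := by
          rw [Finset.sum_add_distrib, ← Finset.mul_sum, ← Finset.mul_sum]
  set A : ℝ → ℝ := fun t => ∑ j, ∑ i : ∀ l, Fin (n l),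
      (∏ l, pbar l (i l)) * P i j * Real.log (P i j / ((1 - t) * q j + t * r j)) with hA
  set B : ℝ → ℝ := fun t => ∑ j, ∑ i : ∀ l, Fin (n l),
      (if i k = a then c i * P i j * Real.log (P i j / ((1 - t) * q j + t * r j)) else 0) with hB
  have hMI : ∀ t : ℝ, mutualInfo P (pt t) = (1 - t) * A t + t * B t := by
    intro t
    have e : ∀ (j : Fin m) (i : ∀ l, Fin (n l)),
        (∏ l, pt t l (i l)) * P i j * Real.log (P i j / outDist P (pt t) j)
          = (1 - t) * ((∏ l, pbar l (i l)) * P i j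
              * Real.log (P i j / ((1 - t) * q j + t * r j)))
            + t * (if i k = a then c i * P i j
              * Real.log (P i j / ((1 - t) * q j + t * r j)) else 0) := by
      intro j i
      rw [hout, hptprod, hsplit pbar i]
      split_ifs <;> ring
    calc mutualInfo P (pt t)
        = ∑ j, ∑ i : ∀ l, Fin (n l),
            (∏ l, pt t l (i l)) * P i j * Real.log (P i j / outDist P (pt t) j) := rfl
      _ = ∑ j, ∑ i : ∀ l, Fin (n l),
            ((1 - t) * ((∏ l, pbar l (i l)) * P i j
              * Real.log (P i j / ((1 - t) * q j + t * r j)))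
            + t * (if i k = a then c i * P i j
              * Real.log (P i j / ((1 - t) * q j + t * r j)) else 0)) :=
          Finset.sum_congr rfl fun j _ => Finset.sum_congr rfl fun i _ => e j i
      _ = (1 - t) * A t + t * B t := by
          rw [hA, hB]
          simp only [Finset.sum_add_distrib, Finset.mul_sum]
  have hCeq : C = ∑ j, ∑ i : ∀ l, Fin (n l),
      (∏ l, pbar l (i l)) * P i j * Real.log (P i j / q j) := by
    rw [hCdef]
    exact Finset.sum_congr rfl fun j _ => Finset.sum_congr rfl fun i _ => by rw [hqout]
  have hCA : ∀ t : ℝ, 0 < t → t < 1 → C ≤ A t := by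
    intro t h0 h1
    have key : C - A t ≤ 0 := by
      have e : C - A t = ∑ j, ∑ i : ∀ l, Fin (n l),
          (∏ l, pbar l (i l)) * P i j *
            (Real.log (P i j / q j) - Real.log (P i j / ((1 - t) * q j + t * r j))) := by
        rw [hCeq, hA, ← Finset.sum_sub_distrib]
        exact Finset.sum_congr rfl fun j _ => by
          rw [← Finset.sum_sub_distrib]
          exact Finset.sum_congr rfl fun i _ => by ring
      rw [e]
      have hterm : ∀ (j : Fin m) (i : ∀ l, Fin (n l)),
          (∏ l, pbar l (i l)) * P i j *
            (Real.log (P i j / q j) - Real.log (P i j / ((1 - t) * q j + t * r j)))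
          ≤ (∏ l, pbar l (i l)) * P i j * (((1 - t) * q j + t * r j) / q j - 1) := by
        intro j i
        rcases eq_or_lt_of_le (mul_nonneg (hw0 i) (hP0 i j)) with hw | hw
        · rw [← hw]; simp
        · have hPij : 0 < P i j := by
            rcases mul_pos_iff.mp hw with ⟨_, h⟩ | ⟨h, _⟩
            · exact h
            · exact absurd h (not_lt.mpr (hw0 i))
          have hqj : 0 < q j := lt_of_lt_of_le hw (hwle j i)
          have hqt : 0 < (1 - t) * q j + t * r j :=
            add_pos_of_pos_of_nonneg (mul_pos (by linarith) hqj) (mul_nonneg h0.le (hr0 j))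
          have e2 : Real.log (P i j / q j) - Real.log (P i j / ((1 - t) * q j + t * r j))
              = Real.log (((1 - t) * q j + t * r j) / q j) := by
            rw [Real.log_div (ne_of_gt hPij) (ne_of_gt hqj),
                Real.log_div (ne_of_gt hPij) (ne_of_gt hqt),
                Real.log_div (ne_of_gt hqt) (ne_of_gt hqj)]
            ring
          rw [e2]
          exact mul_le_mul_of_nonneg_left
            (Real.log_le_sub_one_of_pos (div_pos hqt hqj)) hw.le
      calc (∑ j, ∑ i : ∀ l, Fin (n l),
            (∏ l, pbar l (i l)) * P i j *
              (Real.log (P i j / q j) - Real.log (P i j / ((1 - t) * q j + t * r j))))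
          ≤ ∑ j, ∑ i : ∀ l, Fin (n l),
            (∏ l, pbar l (i l)) * P i j * (((1 - t) * q j + t * r j) / q j - 1) :=
            Finset.sum_le_sum fun j _ => Finset.sum_le_sum fun i _ => hterm j i
        _ = ∑ j, q j * (((1 - t) * q j + t * r j) / q j - 1) := by
            refine Finset.sum_congr rfl fun j _ => ?_
            rw [← Finset.sum_mul]
        _ ≤ ∑ j, t * (r j - q j) := by
            refine Finset.sum_le_sum fun j _ => ?_
            rcases eq_or_lt_of_le (hq0 j) with hqj | hqj
            · rw [← hqj]
              have : (0:ℝ) ≤ t * (r j - 0) := mul_nonneg h0.le (by simpa using hr0 j)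
              simpa using this
            · have e3 : q j * (((1 - t) * q j + t * r j) / q j - 1) = t * (r j - q j) := by
                field_simp
                ring
              rw [e3]
        _ = 0 := by
            rw [← Finset.mul_sum, Finset.sum_sub_distrib, hr1, hq1]
            ring
    linarith
  have hBC : ∀ t : ℝ, 0 < t → t < 1 → B t ≤ C := by
    intro t h0 h1
    have h2 := hopt (pt t) (hpt_mem t h0.le h1.le)
    rw [hMI t] at h2
    have h3 := hCA t h0 h1
    have h4 : (1 - t) * C ≤ (1 - t) * A t :=
      mul_le_mul_of_nonneg_left h3 (by linarith)
    have h5 : t * B t ≤ t * C := by linarith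
    exact le_of_mul_le_mul_left h5 h0
  -- the small-t threshold
  set S : Finset (Fin m × (∀ l, Fin (n l))) :=
    Finset.univ.filter (fun x => x.2 k = a ∧ 0 < c x.2 * P x.2 x.1 ∧ q x.1 = 0) with hS
  set t₀ : ℝ := if h : S.Nonempty then
      min (1/2) (S.inf' h fun x => P x.2 x.1 / r x.1) else 1/2 with ht₀
  have hSpos : ∀ x ∈ S, 0 < P x.2 x.1 ∧ 0 < r x.1 := by
    intro x hx
    rw [hS, Finset.mem_filter] at hx
    obtain ⟨-, hik, hcp, -⟩ := hx
    have hPpos : 0 < P x.2 x.1 := by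
      rcases mul_pos_iff.mp hcp with ⟨_, h⟩ | ⟨h, _⟩
      · exact h
      · exact absurd h (not_lt.mpr (hc0 _))
    exact ⟨hPpos, lt_of_lt_of_le hcp (hcrle _ _ hik)⟩
  have ht₀pos : 0 < t₀ := by
    rw [ht₀]; split_ifs with h
    · refine lt_min (by norm_num) ?_
      rw [Finset.lt_inf'_iff]
      intro x hx
      exact div_pos (hSpos x hx).1 (hSpos x hx).2
    · norm_num
  have ht₀le : t₀ ≤ 1/2 := by
    rw [ht₀]; split_ifs with h
    · exact min_le_left _ _
    · exact le_rfl
  have ht₀S : ∀ x ∈ S, t₀ ≤ P x.2 x.1 / r x.1 := by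
    intro x hx
    rw [ht₀]
    rw [dif_pos ⟨x, hx⟩]
    exact le_trans (min_le_right _ _) (Finset.inf'_le _ hx)
  set K : ℝ := ∑ j, ∑ i : ∀ l, Fin (n l),
      (if i k = a ∧ q j ≠ 0 then c i * P i j * (r j / q j) else 0) with hK
  have hK0 : 0 ≤ K := by
    rw [hK]
    refine Finset.sum_nonneg fun j _ => Finset.sum_nonneg fun i _ => ?_
    split_ifs with h
    · exact mul_nonneg (mul_nonneg (hc0 i) (hP0 i j))
        (div_nonneg (hr0 j) (hq0 j))
    · exact le_rfl
  have hJ : Jfun P pbar k a = ∑ j, ∑ i : ∀ l, Fin (n l),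
      (if i k = a then c i * P i j * Real.log (P i j / q j) else 0) := by
    rw [Jfun]
    refine Finset.sum_congr rfl fun j _ => Finset.sum_congr rfl fun i _ => ?_
    rw [hqout, hc]
  have hstep3 : ∀ t : ℝ, 0 < t → t ≤ t₀ → Jfun P pbar k a ≤ B t + t * K := by
    intro t h0 hle
    have hRsum : B t + t * K = ∑ j, ∑ i : ∀ l, Fin (n l),
        ((if i k = a then c i * P i j * Real.log (P i j / ((1 - t) * q j + t * r j)) else 0)
          + t * (if i k = a ∧ q j ≠ 0 then c i * P i j * (r j / q j) else 0)) := by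
      rw [hB, hK]
      simp only [Finset.sum_add_distrib, Finset.mul_sum]
    rw [hJ, hRsum]
    refine Finset.sum_le_sum fun j _ => Finset.sum_le_sum fun i _ => ?_
    by_cases hik : i k = a
    · simp only [hik, if_true, true_and]
      rcases eq_or_lt_of_le (mul_nonneg (hc0 i) (hP0 i j)) with hcp | hcp
      · rw [← hcp]
        split_ifs <;> simp
      · have hPij : 0 < P i j := by
          rcases mul_pos_iff.mp hcp with ⟨_, h⟩ | ⟨h, _⟩
          · exact h
          · exact absurd h (not_lt.mpr (hc0 _))
        have hrj : 0 < r j := lt_of_lt_of_le hcp (hcrle j i hik)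
        by_cases hqj : q j = 0
        · rw [if_neg (by simp [hqj])]
          rw [hqj, div_zero, Real.log_zero, mul_zero]
          have hxS : (⟨j, i⟩ : Fin m × (∀ l, Fin (n l))) ∈ S := by
            rw [hS, Finset.mem_filter]
            exact ⟨Finset.mem_univ _, hik, hcp, hqj⟩
          have ht : t ≤ P i j / r j := le_trans hle (ht₀S _ hxS)
          have harg : 1 ≤ P i j / ((1 - t) * q j + t * r j) := by
            rw [hqj, mul_zero, zero_add]
            rw [le_div_iff₀ (mul_pos h0 hrj)]
            rw [one_mul]
            calc t * r j ≤ (P i j / r j) * r j :=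
                  mul_le_mul_of_nonneg_right ht hrj.le
              _ = P i j := div_mul_cancel₀ _ (ne_of_gt hrj)
          have h8 := mul_nonneg hcp.le (Real.log_nonneg harg)
          rw [hqj] at h8
          linarith
        · rw [if_pos hqj]
          have hql : 0 < q j := lt_of_le_of_ne (hq0 j) (Ne.symm hqj)
          have hqt : 0 < (1 - t) * q j + t * r j := by
            have h1 : t ≤ 1/2 := le_trans hle ht₀le
            exact add_pos_of_pos_of_nonneg
              (mul_pos (by linarith) hql) (mul_nonneg h0.le (hr0 j))
          have e2 : Real.log (P i j / q j)
              - Real.log (P i j / ((1 - t) * q j + t * r j))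
              = Real.log (((1 - t) * q j + t * r j) / q j) := by
            rw [Real.log_div (ne_of_gt hPij) (ne_of_gt hql),
                Real.log_div (ne_of_gt hPij) (ne_of_gt hqt),
                Real.log_div (ne_of_gt hqt) (ne_of_gt hql)]
            ring
          have e3 : ((1 - t) * q j + t * r j) / q j - 1 = t * (r j / q j) - t := by
            field_simp
            ring
          have h6 : Real.log (P i j / q j)
              ≤ Real.log (P i j / ((1 - t) * q j + t * r j)) + t * (r j / q j) := by
            have hlog := Real.log_le_sub_one_of_pos (div_pos hqt hql)
            rw [e3] at hlog
            linarith [e2, hlog]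
          calc c i * P i j * Real.log (P i j / q j)
              ≤ c i * P i j * (Real.log (P i j / ((1 - t) * q j + t * r j))
                  + t * (r j / q j)) := mul_le_mul_of_nonneg_left h6 hcp.le
            _ = c i * P i j * Real.log (P i j / ((1 - t) * q j + t * r j))
                + t * (c i * P i j * (r j / q j)) := by ring
    · simp [hik]
  have hfin : ∀ ε : ℝ, 0 < ε → Jfun P pbar k a ≤ C + ε := by
    intro ε hε
    set t := min t₀ (ε / (K + 1)) with ht
    have ht0 : 0 < t := lt_min ht₀pos (div_pos hε (by linarith))
    have ht1 : t < 1 := lt_of_le_of_lt (le_trans (min_le_left _ _) ht₀le) (by norm_num)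
    have h7 : t * K ≤ (ε / (K + 1)) * (K + 1) :=
      mul_le_mul (min_le_right _ _) (by linarith) hK0
        (le_of_lt (div_pos hε (by linarith)))
    rw [div_mul_cancel₀ ε (by linarith : K + 1 ≠ 0)] at h7
    calc Jfun P pbar k a ≤ B t + t * K := hstep3 t ht0 (min_le_left _ _)
      _ ≤ C + t * K := by linarith [hBC t ht0 ht1]
      _ ≤ C + ε := by linarith
  exact le_of_forall_pos_le_add hfin

private lemma avgJ {N m : ℕ} {n : Fin N → ℕ}
    (P : (∀ k, Fin (n k)) → Fin m → ℝ) (pbar : ∀ k, Fin (n k) → ℝ) (k : Fin N) :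
    ∑ b : Fin (n k), pbar k b * Jfun P pbar k b = mutualInfo P pbar := by
  classical
  have e1 : ∀ b : Fin (n k), pbar k b * Jfun P pbar k b
      = ∑ j : Fin m, ∑ i : ∀ l, Fin (n l),
        (if i k = b then pbar k (i k) *
          ((∏ l ∈ Finset.univ.erase k, pbar l (i l)) * P i j *
            Real.log (P i j / outDist P pbar j)) else 0) := by
    intro b
    rw [Jfun, Finset.mul_sum]
    refine Finset.sum_congr rfl fun j _ => ?_
    rw [Finset.mul_sum]
    refine Finset.sum_congr rfl fun i _ => ?_
    rw [mul_ite, mul_zero]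
    split_ifs with h
    · rw [h]
    · rfl
  rw [Finset.sum_congr rfl fun b _ => e1 b, Finset.sum_comm]
  refine Finset.sum_congr rfl fun j _ => ?_
  rw [Finset.sum_comm]
  refine Finset.sum_congr rfl fun i _ => ?_
  rw [Finset.sum_ite_eq Finset.univ (i k)]
  simp only [Finset.mem_univ, if_true]
  rw [← Finset.mul_prod_erase Finset.univ (fun l => pbar l (i l)) (Finset.mem_univ k)]
  ring

/-- Necessity of the Kuhn-Tucker conditions: an optimal input distribution
`p̄ = p̄₁ × ⋯ × p̄_N` of an N-user MAC satisfies `J(p̄; i_k) = C` whenever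
`p̄_k(i_k) > 0` and `J(p̄; i_k) ≤ C` whenever `p̄_k(i_k) = 0`. -/
theorem kuhnTucker_necessary {N m : ℕ} {n : Fin N → ℕ}
    (P : (∀ k, Fin (n k)) → Fin m → ℝ) (hP : IsChannel P)
    (pbar : ∀ k, Fin (n k) → ℝ) (hmem : pbar ∈ macDomain N n)
    (hopt : ∀ p ∈ macDomain N n, mutualInfo P p ≤ mutualInfo P pbar)
    (C : ℝ) (hC : C = mutualInfo P pbar) :
    ∀ (k : Fin N) (a : Fin (n k)),
      (0 < pbar k a → Jfun P pbar k a = C) ∧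
      (pbar k a = 0 → Jfun P pbar k a ≤ C) := by
  classical
  subst hC
  intro k a
  have hJle : ∀ b : Fin (n k), Jfun P pbar k b ≤ mutualInfo P pbar :=
    fun b => Jle P hP pbar hmem hopt k b
  refine ⟨fun hpos => ?_, fun _ => hJle a⟩
  by_contra hne
  have hlt : Jfun P pbar k a < mutualInfo P pbar := lt_of_le_of_ne (hJle a) hne
  have hnn : ∀ b, 0 ≤ pbar k b := fun b => (hmem k).1 b
  have hstrict : ∑ b : Fin (n k), pbar k b * Jfun P pbar k b
      < ∑ b : Fin (n k), pbar k b * mutualInfo P pbar := by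
    refine Finset.sum_lt_sum
      (fun b _ => mul_le_mul_of_nonneg_left (hJle b) (hnn b))
      ⟨a, Finset.mem_univ a, ?_⟩
    exact mul_lt_mul_of_pos_left hlt hpos
  rw [avgJ, ← Finset.sum_mul, (hmem k).2, one_mul] at hstrict
  exact lt_irrefl _ hstrict
end

section
/- Main theorem (reduction to elementary MACs): the channel capacity C of an N-user (n₁,...,n_N;m)-MAC (P,X) equals the maximum over F in the elementary face set Φ_N^(m) of the channel capacity C(F) of the restricted MAC (P,F); i.e., C = max_{F ∈ Φ_N^(m)} C(F). In particular, some optimal input distribution is supported, for each user k with n_k ≥ m, on at most m input symbols. -/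
/-!
Fix an optimal input and a user `k`. With the other users' inputs frozen, the output
distribution is the image of `p k` under a linear map whose columns are probability vectors
in `ℝ^m`, and as long as the output stays fixed the mutual information is linear in `p k`, with
coefficients `Jfun`. If `p k` has more than `m` support points, some nonzero direction supported
there lies in the kernel of that map; moving along it, with the sign that does not decrease the
mutual information, until a coordinate vanishes gives an optimal input with smaller support.
Optimal inputs exist by compactness, as `I = H(Y) - H(Y | X)` is continuous on the product of
simplices.
-/

open Real Finset

open Module

section SparseReweighting

variable {𝕜 ι V : Type*} [Field 𝕜] [Fintype ι]

lemma exists_ne_zero_sum_smul_eq_zero_of_finrank_lt_card [AddCommGroup V] [Module 𝕜 V]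
    [FiniteDimensional 𝕜 V] (A : ι → V) {s : Finset ι} (h : finrank 𝕜 V < #s) :
    ∃ d : ι → 𝕜, d ≠ 0 ∧ (∀ i ∉ s, d i = 0) ∧ ∑ i, d i • A i = 0 := by
  classical
  have hdep : ¬ LinearIndepOn 𝕜 A (s : Set ι) := fun hs =>
    h.not_ge (by simpa using hs.fintype_card_le_finrank)
  simp only [linearIndepOn_finset_iff, not_forall] at hdep
  obtain ⟨f, hf, i, hi, hfi⟩ := hdep
  refine ⟨fun j => if j ∈ s then f j else 0, fun hd => hfi ?_, fun j hj => if_neg hj, ?_⟩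
  · simpa [hi] using congrFun hd i
  · simpa [ite_smul, Finset.sum_ite_mem] using hf

variable [LinearOrder 𝕜] [IsStrictOrderedRing 𝕜]

lemma exists_add_smul_mem_stdSimplex_card_support_lt {q e : ι → 𝕜}
    (hq : q ∈ stdSimplex 𝕜 ι) (he : e ≠ 0) (he_sum : ∑ i, e i = 0)
    (he_supp : ∀ i, q i = 0 → e i = 0) :
    ∃ t : 𝕜, 0 ≤ t ∧ q + t • e ∈ stdSimplex 𝕜 ι ∧
      #{i | (q + t • e) i ≠ 0} < #{i | q i ≠ 0} := by
  classical
  have hneg : ({i | e i < 0} : Finset ι).Nonempty := by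
    by_contra! hnone
    refine he (funext fun i => ?_)
    have hnn : ∀ j ∈ univ, 0 ≤ e j := fun j _ => not_lt.mp fun hj =>
      Finset.eq_empty_iff_forall_notMem.mp hnone j (by simpa using hj)
    exact (Finset.sum_eq_zero_iff_of_nonneg hnn).mp he_sum i (mem_univ i)
  obtain ⟨i₀, hi₀, hmin⟩ := exists_min_image _ (fun i => q i / -e i) hneg
  have hei₀ : e i₀ < 0 := by simpa using hi₀
  set t := q i₀ / -e i₀
  have ht : 0 ≤ t := div_nonneg (hq.1 i₀) (by linarith)
  have hvanish : q i₀ + t * e i₀ = 0 := by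
    simp only [t, div_neg, neg_mul, div_mul_cancel₀ _ hei₀.ne, add_neg_cancel]
  refine ⟨t, ht, ⟨fun i => ?_, ?_⟩, ?_⟩
  · rcases lt_or_ge (e i) 0 with hei | hei
    · have := (le_div_iff₀ (neg_pos.mpr hei)).mp (hmin i (by simpa using hei))
      simp only [Pi.add_apply, Pi.smul_apply, smul_eq_mul]
      linarith
    · simpa using add_nonneg (hq.1 i) (mul_nonneg ht hei)
  · simp [Finset.sum_add_distrib, ← Finset.mul_sum, he_sum, hq.2]
  · have hqi₀ : q i₀ ≠ 0 := fun h => hei₀.ne (he_supp i₀ h)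
    refine (card_le_card fun i hi => ?_).trans_lt (card_erase_lt_of_mem (by simpa using hqi₀))
    simp only [Pi.add_apply, Pi.smul_apply, smul_eq_mul, mem_filter, mem_univ, true_and] at hi
    exact mem_erase.mpr ⟨fun h => hi (h ▸ hvanish),
      mem_filter.mpr ⟨mem_univ i, fun h => hi (by simp [h, he_supp i h])⟩⟩

variable [AddCommGroup V] [Module 𝕜 V] [FiniteDimensional 𝕜 V]

lemma exists_reweighting_card_support_lt (A : ι → V) (φ : V →ₗ[𝕜] 𝕜)
    (hφ : ∀ i, φ (A i) = 1) (J : ι → 𝕜) {q : ι → 𝕜} (hq : q ∈ stdSimplex 𝕜 ι)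
    (hcard : finrank 𝕜 V < #{i | q i ≠ 0}) :
    ∃ q' ∈ stdSimplex 𝕜 ι, ∑ i, q' i • A i = ∑ i, q i • A i ∧
      ∑ i, q i * J i ≤ ∑ i, q' i * J i ∧ #{i | q' i ≠ 0} < #{i | q i ≠ 0} := by
  obtain ⟨d, hd, hd_supp, hdA⟩ := exists_ne_zero_sum_smul_eq_zero_of_finrank_lt_card A hcard
  -- `φ` forces kernel directions to have total mass zero, whence `finrank V` and not `+ 1`.
  obtain ⟨e, he, he_supp, heA, heJ⟩ : ∃ e : ι → 𝕜, e ≠ 0 ∧ (∀ i, q i = 0 → e i = 0) ∧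
      ∑ i, e i • A i = 0 ∧ 0 ≤ ∑ i, e i * J i := by
    have hd_supp' : ∀ i, q i = 0 → d i = 0 := fun i hi => hd_supp i (by simp [hi])
    rcases le_total 0 (∑ i, d i * J i) with hdJ | hdJ
    · exact ⟨d, hd, hd_supp', hdA, hdJ⟩
    · refine ⟨-d, neg_ne_zero.mpr hd, fun i hi => by simp [hd_supp' i hi], ?_, ?_⟩
      · simp [hdA]
      · simpa using hdJ
  have he_sum : ∑ i, e i = 0 := by simpa [hφ] using congrArg φ heA
  obtain ⟨t, ht, hq', hcard'⟩ := exists_add_smul_mem_stdSimplex_card_support_lt hq he he_sum he_supp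
  refine ⟨q + t • e, hq', ?_, ?_, hcard'⟩
  · simp [add_smul, sum_add_distrib, mul_smul, ← smul_sum, heA]
  · simpa [add_mul, sum_add_distrib, mul_assoc, ← mul_sum] using mul_nonneg ht heJ

lemma exists_reweighting_card_support_le_finrank (A : ι → V) (φ : V →ₗ[𝕜] 𝕜)
    (hφ : ∀ i, φ (A i) = 1) (J : ι → 𝕜) {q : ι → 𝕜} (hq : q ∈ stdSimplex 𝕜 ι) :
    ∃ q' ∈ stdSimplex 𝕜 ι, ∑ i, q' i • A i = ∑ i, q i • A i ∧
      ∑ i, q i * J i ≤ ∑ i, q' i * J i ∧ #{i | q' i ≠ 0} ≤ finrank 𝕜 V := by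
  induction hs : #{i | q i ≠ 0} using Nat.strong_induction_on generalizing q with
  | _ s ih =>
    rcases le_or_gt s (finrank 𝕜 V) with hle | hlt
    · exact ⟨q, hq, rfl, le_rfl, hs ▸ hle⟩
    obtain ⟨q₁, hq₁, hA₁, hJ₁, hcard₁⟩ :=
      exists_reweighting_card_support_lt A φ hφ J hq (hs ▸ hlt)
    obtain ⟨q₂, hq₂, hA₂, hJ₂, hcard₂⟩ := ih _ (hs ▸ hcard₁) hq₁ rfl
    exact ⟨q₂, hq₂, hA₂.trans hA₁, hJ₁.trans hJ₂, hcard₂⟩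

end SparseReweighting

lemma sum_mul_mul_log_div_sum_eq_negMulLog_sub {ι : Type*} (s : Finset ι) {c x : ι → ℝ}
    (hc : ∀ i ∈ s, 0 ≤ c i) (hx : ∀ i ∈ s, 0 ≤ x i) :
    ∑ i ∈ s, c i * x i * log (x i / ∑ i' ∈ s, c i' * x i') =
      negMulLog (∑ i ∈ s, c i * x i) - ∑ i ∈ s, c i * negMulLog (x i) := by
  set o := ∑ i' ∈ s, c i' * x i'
  have hterm : ∀ i ∈ s,
      c i * x i * log (x i / o) = -(c i * negMulLog (x i)) - c i * x i * log o := by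
    intro i hi
    rcases eq_or_ne (c i * x i) 0 with h | h
    · rcases mul_eq_zero.mp h with h | h <;> simp [h]
    have ho : o ≠ 0 := (lt_of_lt_of_le (lt_of_le_of_ne (mul_nonneg (hc i hi) (hx i hi)) h.symm)
      (single_le_sum (fun j hj => mul_nonneg (hc j hj) (hx j hj)) hi)).ne'
    rw [log_div (right_ne_zero_of_mul h) ho, negMulLog]
    ring
  rw [sum_congr rfl hterm, sum_sub_distrib, ← sum_mul, sum_neg_distrib, negMulLog]
  ring

section MAC

variable {N m : ℕ} {n : Fin N → ℕ}

lemma mutualInfo_eq_negMulLog_sub {P : (∀ k, Fin (n k)) → Fin m → ℝ} (hP : ∀ i j, 0 ≤ P i j)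
    {p : ∀ k, Fin (n k) → ℝ} (hp : ∀ k a, 0 ≤ p k a) :
    mutualInfo P p = ∑ j, negMulLog (outDist P p j) -
      ∑ i : ∀ k, Fin (n k), (∏ k, p k (i k)) * ∑ j, negMulLog (P i j) := by
  calc mutualInfo P p
      = ∑ j, (negMulLog (outDist P p j) -
          ∑ i : ∀ k, Fin (n k), (∏ k, p k (i k)) * negMulLog (P i j)) :=
        sum_congr rfl fun j _ => sum_mul_mul_log_div_sum_eq_negMulLog_sub _
          (fun i _ => prod_nonneg fun k _ => hp k (i k)) (fun i _ => hP i j)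
    _ = _ := by simp only [sum_sub_distrib, mul_sum]; rw [sum_comm (γ := Fin m)]

lemma continuousOn_mutualInfo {P : (∀ k, Fin (n k)) → Fin m → ℝ} (hP : IsChannel P) :
    ContinuousOn (mutualInfo P) (macDomain N n) := by
  refine ContinuousOn.congr (f := fun p => ∑ j, negMulLog (outDist P p j) -
      ∑ i : ∀ k, Fin (n k), (∏ k, p k (i k)) * ∑ j, negMulLog (P i j)) ?_
    fun p hp => mutualInfo_eq_negMulLog_sub (fun i => (hP i).1) fun k => (hp k).1
  unfold outDist
  fun_prop

lemma isCompact_macDomain : IsCompact (macDomain N n) := by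
  simpa [macDomain, Set.pi] using isCompact_univ_pi fun _ => isCompact_stdSimplex ℝ _

lemma macDomain_nonempty (hn : ∀ k, 0 < n k) : (macDomain N n).Nonempty :=
  ⟨fun k => Pi.single ⟨0, hn k⟩ 1, fun _ => single_mem_stdSimplex ℝ _⟩

lemma exists_isMaxOn_mutualInfo {P : (∀ k, Fin (n k)) → Fin m → ℝ} (hP : IsChannel P)
    (hn : ∀ k, 0 < n k) : ∃ p ∈ macDomain N n, IsMaxOn (mutualInfo P) (macDomain N n) p :=
  isCompact_macDomain.exists_isMaxOn (macDomain_nonempty hn) (continuousOn_mutualInfo hP)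

noncomputable def userChannel (P : (∀ k, Fin (n k)) → Fin m → ℝ) (p : ∀ k, Fin (n k) → ℝ)
    (k : Fin N) (a : Fin (n k)) (j : Fin m) : ℝ :=
  ∑ i : ∀ l, Fin (n l), if i k = a then (∏ l ∈ univ.erase k, p l (i l)) * P i j else 0

lemma sum_prod_update_mul (p : ∀ k, Fin (n k) → ℝ) (k : Fin N) (q : Fin (n k) → ℝ)
    (h : (∀ l, Fin (n l)) → ℝ) :
    ∑ i : ∀ l, Fin (n l), (∏ l, Function.update p k q l (i l)) * h i =
      ∑ a, q a * ∑ i : ∀ l, Fin (n l),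
        if i k = a then (∏ l ∈ univ.erase k, p l (i l)) * h i else 0 := by
  have hprod : ∀ i : ∀ l, Fin (n l),
      ∏ l, Function.update p k q l (i l) = q (i k) * ∏ l ∈ univ.erase k, p l (i l) := fun i => by
    rw [← mul_prod_erase univ _ (mem_univ k), Function.update_self]
    congr 1
    exact prod_congr rfl fun l hl => by rw [Function.update_of_ne (ne_of_mem_erase hl)]
  simp_rw [hprod, mul_sum, mul_ite, mul_zero]
  rw [sum_comm]
  exact sum_congr rfl fun i _ => by simp [mul_assoc]

lemma outDist_update (P : (∀ k, Fin (n k)) → Fin m → ℝ) (p : ∀ k, Fin (n k) → ℝ)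
    (k : Fin N) (q : Fin (n k) → ℝ) (j : Fin m) :
    outDist P (Function.update p k q) j = ∑ a, q a * userChannel P p k a j :=
  sum_prod_update_mul p k q fun i => P i j

lemma sum_userChannel {P : (∀ k, Fin (n k)) → Fin m → ℝ} (hP : IsChannel P)
    {p : ∀ k, Fin (n k) → ℝ} (hp : ∀ l, ∑ b, p l b = 1) (k : Fin N) (a : Fin (n k)) :
    ∑ j, userChannel P p k a j = 1 := by
  calc ∑ j, userChannel P p k a j
      = ∑ i : ∀ l, Fin (n l), if i k = a then ∏ l ∈ univ.erase k, p l (i l) else 0 := by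
        simp only [userChannel]
        rw [sum_comm]
        simp [sum_ite_irrel, ← mul_sum, (hP _).2]
    _ = ∑ i : ∀ l, Fin (n l), ∏ l, Function.update p k (Pi.single a 1) l (i l) := by
        simpa [Pi.single_apply] using (sum_prod_update_mul p k (Pi.single a 1) fun _ => 1).symm
    _ = ∏ l, ∑ b, Function.update p k (Pi.single a 1) l b := by
        rw [prod_univ_sum, Fintype.piFinset_univ]
    _ = 1 := prod_eq_one fun l _ => by
        rcases eq_or_ne l k with rfl | hlk
        · simp
        · rw [Function.update_of_ne hlk, hp l]

lemma mutualInfo_update_of_outDist_eq (P : (∀ k, Fin (n k)) → Fin m → ℝ)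
    (p : ∀ k, Fin (n k) → ℝ) (k : Fin N) (q : Fin (n k) → ℝ)
    (hout : ∀ j, outDist P (Function.update p k q) j = outDist P p j) :
    mutualInfo P (Function.update p k q) = ∑ a, q a * Jfun P p k a := by
  simp only [mutualInfo, Jfun, hout]
  calc _ = ∑ j, ∑ a, q a * ∑ i : ∀ l, Fin (n l), if i k = a then
          (∏ l ∈ univ.erase k, p l (i l)) * P i j * log (P i j / outDist P p j) else 0 :=
        sum_congr rfl fun j _ => by
          simpa [mul_assoc] using sum_prod_update_mul p k q
            fun i => P i j * log (P i j / outDist P p j)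
    _ = _ := by simp only [mul_sum]; exact sum_comm

lemma mutualInfo_eq_sum_mul_Jfun (P : (∀ k, Fin (n k)) → Fin m → ℝ) (p : ∀ k, Fin (n k) → ℝ)
    (k : Fin N) : mutualInfo P p = ∑ a, p k a * Jfun P p k a := by
  simpa using mutualInfo_update_of_outDist_eq P p k (p k) (by simp)

lemma exists_update_mutualInfo_ge_card_support_le {P : (∀ k, Fin (n k)) → Fin m → ℝ}
    (hP : IsChannel P) {p : ∀ k, Fin (n k) → ℝ} (hp : p ∈ macDomain N n) (k : Fin N) :
    ∃ q ∈ stdSimplex ℝ (Fin (n k)),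
      mutualInfo P p ≤ mutualInfo P (Function.update p k q) ∧ #{a | q a ≠ 0} ≤ m := by
  let total : (Fin m → ℝ) →ₗ[ℝ] ℝ := ∑ j, LinearMap.proj j
  have htotal : ∀ a, total (userChannel P p k a) = 1 := fun a => by
    simpa [total] using sum_userChannel hP (fun l => (hp l).2) k a
  obtain ⟨q, hq, hA, hJ, hcard⟩ := exists_reweighting_card_support_le_finrank
    (userChannel P p k) total htotal (Jfun P p k) (hp k)
  have hout : ∀ j, outDist P (Function.update p k q) j = outDist P p j := fun j => by
    calc outDist P (Function.update p k q) j = ∑ a, q a * userChannel P p k a j :=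
          outDist_update P p k q j
      _ = ∑ a, p k a * userChannel P p k a j := by simpa using congrFun hA j
      _ = outDist P p j := by rw [← outDist_update, Function.update_eq_self]
  refine ⟨q, hq, ?_, by simpa using hcard⟩
  rw [mutualInfo_update_of_outDist_eq P p k q hout, mutualInfo_eq_sum_mul_Jfun P p k]
  exact hJ

lemma update_mem_macDomain {p : ∀ k, Fin (n k) → ℝ} (hp : p ∈ macDomain N n) {k : Fin N}
    {q : Fin (n k) → ℝ} (hq : q ∈ stdSimplex ℝ (Fin (n k))) :
    Function.update p k q ∈ macDomain N n := fun l => by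
  rcases eq_or_ne l k with rfl | hlk
  · simpa using hq
  · simpa [Function.update_of_ne hlk] using hp l

lemma exists_isMaxOn_mutualInfo_card_support_le {P : (∀ k, Fin (n k)) → Fin m → ℝ}
    (hP : IsChannel P) (hn : ∀ k, 0 < n k) :
    ∃ p ∈ macDomain N n, IsMaxOn (mutualInfo P) (macDomain N n) p ∧
      ∀ k, #{a | p k a ≠ 0} ≤ m := by
  obtain ⟨p₀, hp₀, hmax₀⟩ := exists_isMaxOn_mutualInfo hP hn
  suffices ∀ S : Finset (Fin N), ∃ p ∈ macDomain N n, IsMaxOn (mutualInfo P) (macDomain N n) p ∧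
      ∀ k ∈ S, #{a | p k a ≠ 0} ≤ m by
    simpa using this univ
  intro S
  induction S using Finset.induction_on with
  | empty => exact ⟨p₀, hp₀, hmax₀, by simp⟩
  | insert k S _ ih =>
    obtain ⟨p, hp, hmax, hS⟩ := ih
    obtain ⟨q, hq, hMI, hcard⟩ := exists_update_mutualInfo_ge_card_support_le hP hp k
    refine ⟨_, update_mem_macDomain hp hq, fun r hr => (hmax hr).trans hMI, fun l hl => ?_⟩
    rcases eq_or_ne l k with rfl | hlk
    · simpa using hcard
    · simpa [Function.update_of_ne hlk] using hS l ((mem_insert.mp hl).resolve_left hlk)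

end MAC

theorem capacity_attained_on_elementary_face_general {N m : ℕ} {n : Fin N → ℕ}
    (hn : ∀ k, 2 ≤ n k)
    (P : (∀ k, Fin (n k)) → Fin m → ℝ) (hP : IsChannel P) :
    ∃ pbar ∈ macDomain N n,
      (∀ p ∈ macDomain N n, mutualInfo P p ≤ mutualInfo P pbar) ∧
      ∃ Λ : ∀ k, Finset (Fin (n k)),
        (∀ k, (Λ k).card = min (n k) m) ∧
        (∀ k, ∀ i ∉ Λ k, pbar k i = 0) := by
  obtain ⟨pbar, hpbar, hmax, hcard⟩ :=
    exists_isMaxOn_mutualInfo_card_support_le hP fun k => two_pos.trans_le (hn k)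
  have hΛ : ∀ k, ∃ Λ : Finset (Fin (n k)), ({a | pbar k a ≠ 0} : Finset _) ⊆ Λ ∧ #Λ = min (n k) m :=
    fun k => exists_superset_card_eq
      (le_min ((card_le_univ _).trans_eq (Fintype.card_fin _)) (hcard k))
      ((min_le_left _ _).trans_eq (Fintype.card_fin _).symm)
  choose Λ hsupp hΛcard using hΛ
  refine ⟨pbar, hpbar, isMaxOn_iff.mp hmax, Λ, hΛcard, fun k i hi => ?_⟩
  by_contra h
  exact hi (hsupp k (by simpa using h))

/-- Main theorem (reduction to elementary MACs): the capacity of an N-user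
`(n₁,...,n_N;m)`-MAC is attained on some member of the elementary face set
`Φ_N^(m)`: there is an optimal input distribution `p̄` together with faces
`Λ k` of the input simplices, where `Λ k` has `m` vertices when `n_k ≥ m` and is
the whole simplex when `n_k < m`, such that each `p̄_k` is supported on `Λ k`.
In particular, for every user `k` with `n_k ≥ m` some optimal distribution uses
at most `m` input symbols. -/
theorem capacity_attained_on_elementary_face {N m : ℕ} {n : Fin N → ℕ}
    (hn : ∀ k, 2 ≤ n k) (hm : 2 ≤ m)
    (P : (∀ k, Fin (n k)) → Fin m → ℝ) (hP : IsChannel P) :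
    ∃ pbar ∈ macDomain N n,
      (∀ p ∈ macDomain N n, mutualInfo P p ≤ mutualInfo P pbar) ∧
      ∃ Λ : ∀ k, Finset (Fin (n k)),
        (∀ k, (Λ k).card = min (n k) m) ∧
        (∀ k, ∀ i ∉ Λ k, pbar k i = 0) :=
  capacity_attained_on_elementary_face_general hn P hP
end
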